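/- arXiv:2405.12894 — 4 statements merged into one kernel-verified Lean document; each statement's English description precedes it below -/
import Mathlib

section
/- Let B be an N×N real matrix with all entries nonnegative, and suppose there is β ∈ [0,1] such that every column sum of B lies in the interval [β, 1]. Let 1_N denote the all-ones row vector in ℝ^N. Then for every integer J ≥ 1, every entry of the row vector 1_N − 1_N B^J lies in [0, 1 − β^J], and consequently ‖1_N − 1_N B^J‖₂ ≤ √N · (1 − β^J). -/
open Matrix

/-- The Euclidean norm of a row vector. -/
noncomputable def rowNorm {N : ℕ} (v : Fin N → ℝ) : ℝ :=
  Real.sqrt (∑ m, v m ^ 2)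

private lemma key_bounds {N : ℕ} (B : Matrix (Fin N) (Fin N) ℝ)
    (hB : ∀ n m, 0 ≤ B n m)
    (β : ℝ) (hβ0 : 0 ≤ β)
    (hcol : ∀ m, β ≤ ∑ n, B n m ∧ ∑ n, B n m ≤ 1) :
    ∀ J : ℕ, 1 ≤ J → ∀ m,
      β ^ J ≤ ((fun _ => (1 : ℝ)) ᵥ* (B ^ J)) m ∧
      ((fun _ => (1 : ℝ)) ᵥ* (B ^ J)) m ≤ 1 := by
  intro J
  induction J with
  | zero => intro h; omega
  | succ J ih =>
    intro _ m
    by_cases hJ : 1 ≤ J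
    · have hstep : (fun _ => (1 : ℝ)) ᵥ* (B ^ (J + 1)) =
          ((fun _ => (1 : ℝ)) ᵥ* (B ^ J)) ᵥ* B := by
        rw [pow_succ, vecMul_vecMul]
      rw [hstep]
      simp only [vecMul, dotProduct]
      constructor
      · rw [pow_succ]
        calc β ^ J * β ≤ β ^ J * ∑ n, B n m := by
              apply mul_le_mul_of_nonneg_left (hcol m).1 (pow_nonneg hβ0 J)
          _ = ∑ n, β ^ J * B n m := by rw [Finset.mul_sum]
          _ ≤ ∑ n, ((fun _ => (1 : ℝ)) ᵥ* (B ^ J)) n * B n m := by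
              apply Finset.sum_le_sum
              intro n _
              exact mul_le_mul_of_nonneg_right (ih hJ n).1 (hB n m)
      · calc ∑ n, ((fun _ => (1 : ℝ)) ᵥ* (B ^ J)) n * B n m
            ≤ ∑ n, 1 * B n m := by
              apply Finset.sum_le_sum
              intro n _
              exact mul_le_mul_of_nonneg_right (ih hJ n).2 (hB n m)
          _ = ∑ n, B n m := by simp
          _ ≤ 1 := (hcol m).2
    · have : J = 0 := by omega
      subst this
      simp only [zero_add, pow_one, vecMul, dotProduct, one_mul]
      exact hcol m

/-- Appendix E upper bound on `‖1_N M₁‖`: if `B` has nonnegative entries and every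
column sum of `B` lies in `[β, 1]` with `β ∈ [0,1]`, then for every `J ≥ 1` each
entry of the row vector `1_N − 1_N B^J` (the `m`-th entry is `1 − Σ_n (B^J)_{n,m}`)
lies in `[0, 1 − β^J]`, and consequently `‖1_N − 1_N B^J‖₂ ≤ √N · (1 − β^J)`. -/
theorem ones_sub_ones_vecMul_pow_bounds
    {N : ℕ} (B : Matrix (Fin N) (Fin N) ℝ)
    (hB : ∀ n m, 0 ≤ B n m)
    (β : ℝ) (hβ0 : 0 ≤ β) (hβ1 : β ≤ 1)
    (hcol : ∀ m, β ≤ ∑ n, B n m ∧ ∑ n, B n m ≤ 1) :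
    ∀ J : ℕ, 1 ≤ J →
      (∀ m, 0 ≤ 1 - ((fun _ => (1 : ℝ)) ᵥ* (B ^ J)) m ∧
        1 - ((fun _ => (1 : ℝ)) ᵥ* (B ^ J)) m ≤ 1 - β ^ J) ∧
      rowNorm (fun m => 1 - ((fun _ => (1 : ℝ)) ᵥ* (B ^ J)) m) ≤
        Real.sqrt N * (1 - β ^ J) := by
  intro J hJ
  have hk := key_bounds B hB β hβ0 hcol J hJ
  have hent : ∀ m, 0 ≤ 1 - ((fun _ => (1 : ℝ)) ᵥ* (B ^ J)) m ∧
      1 - ((fun _ => (1 : ℝ)) ᵥ* (B ^ J)) m ≤ 1 - β ^ J := by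
    intro m
    constructor
    · linarith [(hk m).2]
    · linarith [(hk m).1]
  refine ⟨hent, ?_⟩
  have h1β : 0 ≤ 1 - β ^ J := by
    have := pow_le_one₀ hβ0 hβ1 (n := J)
    linarith
  rw [rowNorm]
  calc Real.sqrt (∑ m, (1 - ((fun _ => (1 : ℝ)) ᵥ* (B ^ J)) m) ^ 2)
      ≤ Real.sqrt (∑ _m : Fin N, (1 - β ^ J) ^ 2) := by
        apply Real.sqrt_le_sqrt
        apply Finset.sum_le_sum
        intro m _
        exact pow_le_pow_left₀ (hent m).1 (hent m).2 2
    _ = Real.sqrt (N * (1 - β ^ J) ^ 2) := by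
        rw [Finset.sum_const, Finset.card_univ, Fintype.card_fin, nsmul_eq_mul]
    _ = Real.sqrt N * (1 - β ^ J) := by
        rw [Real.sqrt_mul (Nat.cast_nonneg N), Real.sqrt_sq h1β]
end

section
/- Fix N ≥ 1 and J ≥ 1, real coefficients c_{n,m} and ε_{n,m} ∈ [0,1] for n, m ∈ {1,…,N}, and a deterministic vector w_0 ∈ ℝ^N. On a probability space, let (e_{n,m,j})_{n,m∈{1,…,N}, j∈{1,…,J}} be integrable real random variables with E[e_{n,m,j}] = 1 − ε_{n,m}, such that for each j the σ-algebra generated by {e_{n,m,j} : n,m} is independent of the σ-algebra generated by {e_{n,m,j'} : n,m, j' < j}. Define random variables w_{n,0} = (w_0)_n and, for j = 1,…,J, w_{n,j} = Σ_{m=1}^N c_{n,m} e_{n,m,j} w_{m,j−1}. Let C = (c_{n,m}) and T = (1 − ε_{n,m}) as N×N matrices, and let J_N be the N×N matrix with every entry 1/N. Then E[w_{n,J}] = ((C∘T)^J w_0)_n for every n, and consequently the expected bias satisfies E[(1/N)Σ_m (w_0)_m − w_{n,J}] = ((J_N − (C∘T)^J) w_0)_n. -/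
/-!
At step `j` the reception indicators `e_{·,·,j}` are independent of the σ-algebra generated by
the earlier indicators, and `w_{·,j-1}` is measurable with respect to that σ-algebra. Hence each
product `e_{n,m,j} w_{m,j-1}` has expectation `(1 - ε_{n,m}) E[w_{m,j-1}]`, so the mean vector
evolves linearly, `E[w_j] = (C ∘ T) E[w_{j-1}]`, and `E[w_J] = (C ∘ T)^J w₀` by induction.
-/

open MeasureTheory ProbabilityTheory Matrix

section Expectation

variable {ι Ω : Type*} [Fintype ι] [MeasurableSpace Ω] {μ : Measure Ω}

theorem ProbabilityTheory.IndepFun.integrable_const_mul_mul {E W : Ω → ℝ} (c : ℝ)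
    (hE : Integrable E μ) (hW : Integrable W μ) (hind : IndepFun E W μ) :
    Integrable (fun ω => c * E ω * W ω) μ := by
  simpa only [mul_assoc, Pi.mul_apply] using (hind.integrable_mul hE hW).const_mul c

theorem integrable_sum_mul_of_indepFun {E W : ι → Ω → ℝ} (c : ι → ℝ)
    (hE : ∀ m, Integrable (E m) μ) (hW : ∀ m, Integrable (W m) μ)
    (hind : ∀ m, IndepFun (E m) (W m) μ) :
    Integrable (fun ω => ∑ m, c m * E m ω * W m ω) μ :=
  integrable_finsetSum _ fun m _ => (hind m).integrable_const_mul_mul (c m) (hE m) (hW m)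

theorem integral_sum_mul_of_indepFun {E W : ι → Ω → ℝ} (c : ι → ℝ)
    (hE : ∀ m, Integrable (E m) μ) (hW : ∀ m, Integrable (W m) μ)
    (hind : ∀ m, IndepFun (E m) (W m) μ) :
    ∫ ω, ∑ m, c m * E m ω * W m ω ∂μ = ∑ m, c m * (∫ ω, E m ω ∂μ) * ∫ ω, W m ω ∂μ := by
  rw [integral_finsetSum _ fun m _ => (hind m).integrable_const_mul_mul (c m) (hE m) (hW m)]
  refine Finset.sum_congr rfl fun m _ => ?_
  simp only [mul_assoc, integral_const_mul,
    (hind m).integral_fun_mul_eq_mul_integral (hE m).1 (hW m).1]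

end Expectation

theorem of_const_mulVec_apply {ι α : Type*} [Fintype ι] [NonUnitalNonAssocSemiring α] (a : α)
    (v : ι → α) (i : ι) :
    ((of fun _ _ => a : Matrix ι ι α) *ᵥ v) i = a * ∑ j, v j := by
  simp [mulVec, dotProduct, Finset.mul_sum]

section Aggregation

variable {ι Ω : Type*} {e : ι → ι → ℕ → Ω → ℝ}

abbrev pastSigma (e : ι → ι → ℕ → Ω → ℝ) (j : ℕ) : MeasurableSpace Ω :=
  ⨆ n, ⨆ m, ⨆ (j' : ℕ) (_ : j' < j), MeasurableSpace.comap (e n m j') inferInstance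

theorem pastSigma_mono : Monotone (pastSigma e) := fun _ _ hjk =>
  iSup_mono fun _ => iSup_mono fun _ => iSup_mono fun _ =>
    iSup_const_mono fun h => lt_of_lt_of_le h hjk

theorem measurable_pastSigma_succ (n m : ι) (j : ℕ) :
    Measurable[pastSigma e (j + 1)] (e n m j) := by
  rw [measurable_iff_comap_le]
  refine le_trans ?_ (le_iSup₂ n m)
  exact le_iSup₂ (f := fun (j' : ℕ) (_ : j' < j + 1) =>
    MeasurableSpace.comap (e n m j') inferInstance) j j.lt_succ_self

theorem indepFun_of_measurable_pastSigma [MeasurableSpace Ω] {μ : Measure Ω} {j : ℕ}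
    {X : Ω → ℝ}
    (hindep : Indep (⨆ n, ⨆ m, MeasurableSpace.comap (e n m j) inferInstance)
      (pastSigma e j) μ)
    (hX : Measurable[pastSigma e j] X) (n m : ι) :
    IndepFun (e n m j) X μ :=
  indep_of_indep_of_le_right (indep_of_indep_of_le_left hindep
    (le_iSup₂ (f := fun n m => MeasurableSpace.comap (e n m j) inferInstance) n m))
    (measurable_iff_comap_le.mp hX)

variable [Fintype ι] {c : ι → ι → ℝ} {w0 : ι → ℝ} {w : ℕ → ι → Ω → ℝ} {J : ℕ}

theorem aggregation_succ (hwrec : ∀ j, 1 ≤ j → j ≤ J → ∀ n ω,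
      w j n ω = ∑ m, c n m * e n m j ω * w (j - 1) m ω)
    {j : ℕ} (hj : j < J) (n : ι) :
    w (j + 1) n = fun ω => ∑ m, c n m * e n m (j + 1) ω * w j m ω :=
  funext fun ω => hwrec (j + 1) j.succ_pos hj n ω

theorem measurable_pastSigma_aggregation (hw0 : ∀ n ω, w 0 n ω = w0 n)
    (hwrec : ∀ j, 1 ≤ j → j ≤ J → ∀ n ω,
      w j n ω = ∑ m, c n m * e n m j ω * w (j - 1) m ω) :
    ∀ j ≤ J, ∀ n, Measurable[pastSigma e (j + 1)] (w j n) := by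
  intro j hj
  induction j with
  | zero => exact fun n => (funext (hw0 n)).symm ▸ measurable_const
  | succ j ih =>
    intro n
    rw [aggregation_succ hwrec hj n]
    refine Finset.measurable_sum _ fun m _ => ?_
    exact (measurable_const.mul (measurable_pastSigma_succ n m (j + 1))).mul
      ((ih (by omega) m).mono (pastSigma_mono (j + 1).le_succ) le_rfl)

theorem integrable_and_integral_aggregation [DecidableEq ι] [MeasurableSpace Ω]
    {μ : Measure Ω} [IsProbabilityMeasure μ] {t : ι → ι → ℝ}
    (hint : ∀ n m j, 1 ≤ j → j ≤ J → Integrable (e n m j) μ)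
    (hmean : ∀ n m j, 1 ≤ j → j ≤ J → ∫ ω, e n m j ω ∂μ = t n m)
    (hindep : ∀ j, 1 ≤ j → j ≤ J →
      Indep (⨆ n, ⨆ m, MeasurableSpace.comap (e n m j) inferInstance) (pastSigma e j) μ)
    (hw0 : ∀ n ω, w 0 n ω = w0 n)
    (hwrec : ∀ j, 1 ≤ j → j ≤ J → ∀ n ω,
      w j n ω = ∑ m, c n m * e n m j ω * w (j - 1) m ω) :
    ∀ j ≤ J, ∀ n, Integrable (w j n) μ ∧ ∫ ω, w j n ω ∂μ = ((of c ⊙ of t) ^ j *ᵥ w0) n := by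
  intro j hj
  induction j with
  | zero => simp [funext (hw0 _)]
  | succ j ih =>
    have hW m := (ih (by omega) m).1
    have hE n m := hint n m (j + 1) j.succ_pos hj
    have hind n m := indepFun_of_measurable_pastSigma (hindep (j + 1) j.succ_pos hj)
      (measurable_pastSigma_aggregation hw0 hwrec j (by omega) m) n m
    intro n
    rw [aggregation_succ hwrec hj n]
    refine ⟨integrable_sum_mul_of_indepFun _ (hE n) hW (hind n), ?_⟩
    rw [integral_sum_mul_of_indepFun _ (hE n) hW (hind n), pow_succ', ← mulVec_mulVec]
    refine Finset.sum_congr rfl fun m _ => ?_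
    rw [hmean n m (j + 1) j.succ_pos hj, (ih (by omega) m).2]
    rfl

end Aggregation

theorem expected_bias_imperfect_aggregation_general
    {N J : ℕ}
    (c ε : Fin N → Fin N → ℝ)
    (w0 : Fin N → ℝ)
    {Ω : Type*} [MeasurableSpace Ω] (μ : Measure Ω) [IsProbabilityMeasure μ]
    (e : Fin N → Fin N → ℕ → Ω → ℝ)
    (hint : ∀ n m j, 1 ≤ j → j ≤ J → Integrable (e n m j) μ)
    (hmean : ∀ n m j, 1 ≤ j → j ≤ J → (∫ ω, e n m j ω ∂μ) = 1 - ε n m)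
    (hindep : ∀ j, 1 ≤ j → j ≤ J →
      Indep
        (⨆ n, ⨆ m, MeasurableSpace.comap (e n m j) (inferInstance : MeasurableSpace ℝ))
        (⨆ n, ⨆ m, ⨆ (j' : ℕ) (_ : j' < j),
          MeasurableSpace.comap (e n m j') (inferInstance : MeasurableSpace ℝ)) μ)
    (w : ℕ → Fin N → Ω → ℝ)
    (hw0 : ∀ n ω', w 0 n ω' = w0 n)
    (hwrec : ∀ j, 1 ≤ j → j ≤ J → ∀ n ω',
      w j n ω' = ∑ m, c n m * e n m j ω' * w (j - 1) m ω') :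
    ∀ n,
      (∫ ω', w J n ω' ∂μ) =
        (((Matrix.hadamard (Matrix.of c) (Matrix.of fun n' m' => 1 - ε n' m')) ^ J).mulVec
          w0) n ∧
      (∫ ω', ((1 / (N : ℝ)) * ∑ m, w0 m - w J n ω') ∂μ) =
        (((Matrix.of fun _ _ => (1 : ℝ) / N) -
          (Matrix.hadamard (Matrix.of c) (Matrix.of fun n' m' => 1 - ε n' m')) ^ J).mulVec
            w0) n := by
  intro n
  obtain ⟨hwJ, hmeanJ⟩ :=
    integrable_and_integral_aggregation hint hmean hindep hw0 hwrec J le_rfl n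
  refine ⟨hmeanJ, ?_⟩
  rw [integral_sub (integrable_const _) hwJ, integral_const, probReal_univ, one_smul, hmeanJ,
    sub_mulVec, Pi.sub_apply, of_const_mulVec_apply]

/-- Lemma 2 of the paper (one model coordinate): with imperfect local aggregations
`w_{n,j} = Σ_m c_{n,m} e_{n,m,j} w_{m,j−1}`, where the packet-reception variables
`e_{n,m,j}` have mean `1 − ε_{n,m}` and, for each `j`, are independent of the past,
the expectation of the aggregated model is `E[w_{n,J}] = ((C∘T)^J w₀)_n` and the
expected bias from the ideal average is `((J_N − (C∘T)^J) w₀)_n`. -/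
theorem expected_bias_imperfect_aggregation
    {N J : ℕ} (hN : 1 ≤ N) (hJ : 1 ≤ J)
    (c ε : Fin N → Fin N → ℝ) (hε : ∀ n m, ε n m ∈ Set.Icc (0 : ℝ) 1)
    (w0 : Fin N → ℝ)
    {Ω : Type*} [MeasurableSpace Ω] (μ : Measure Ω) [IsProbabilityMeasure μ]
    (e : Fin N → Fin N → ℕ → Ω → ℝ)
    (hint : ∀ n m j, 1 ≤ j → j ≤ J → Integrable (e n m j) μ)
    (hmean : ∀ n m j, 1 ≤ j → j ≤ J → (∫ ω, e n m j ω ∂μ) = 1 - ε n m)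
    (hindep : ∀ j, 1 ≤ j → j ≤ J →
      Indep
        (⨆ n, ⨆ m, MeasurableSpace.comap (e n m j) (inferInstance : MeasurableSpace ℝ))
        (⨆ n, ⨆ m, ⨆ (j' : ℕ) (_ : j' < j),
          MeasurableSpace.comap (e n m j') (inferInstance : MeasurableSpace ℝ)) μ)
    (w : ℕ → Fin N → Ω → ℝ)
    (hw0 : ∀ n ω', w 0 n ω' = w0 n)
    (hwrec : ∀ j, 1 ≤ j → j ≤ J → ∀ n ω',
      w j n ω' = ∑ m, c n m * e n m j ω' * w (j - 1) m ω') :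
    ∀ n,
      (∫ ω', w J n ω' ∂μ) =
        (((Matrix.hadamard (Matrix.of c) (Matrix.of fun n' m' => 1 - ε n' m')) ^ J).mulVec
          w0) n ∧
      (∫ ω', ((1 / (N : ℝ)) * ∑ m, w0 m - w J n ω') ∂μ) =
        (((Matrix.of fun _ _ => (1 : ℝ) / N) -
          (Matrix.hadamard (Matrix.of c) (Matrix.of fun n' m' => 1 - ε n' m')) ^ J).mulVec
            w0) n :=
  expected_bias_imperfect_aggregation_general c ε w0 μ e hint hmean hindep w hw0 hwrec
end

section
/- Let M ≥ 1 and work in ℝ^M with the Euclidean inner product. Let F_1, …, F_N : ℝ^M → ℝ be differentiable functions such that each ∇F_n is L-Lipschitz and each F_n is μ-strongly convex (F_n − (μ/2)‖·‖² is convex), with 0 < μ ≤ L. Let p_1, …, p_N ≥ 0 with Σ_n p_n = 1, set F = Σ_n p_n F_n, and let ω* be a global minimizer of F. Let ω_1, …, ω_N ∈ ℝ^M, set ω̄ = Σ_n p_n ω_n and g_n = ∇F_n(ω_n). Then for any step size η with 0 < η < 1/(2L), ‖Σ_{n=1}^N p_n (ω_n − η g_n) − ω*‖² ≤ (1 − μη/2)·‖ω̄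 − ω*‖² + (2η²L² + (L+μ)η)·Σ_{n=1}^N p_n ‖ω̄ − ω_n‖². -/
/-!
Write the new aggregate as `ω̄ - η ḡ` with `ḡ = Σ pₙ ∇Fₙ(ωₙ)` and expand the square. The cross
term is bounded device by device: smoothness of `Fₙ` between `ωₙ` and `ω̄` and strong convexity
between `ωₙ` and `ω*` give
`⟪∇Fₙ(ωₙ), ω̄ - ω*⟫ ≥ Fₙ(ω̄) - Fₙ(ω*) - (L/2)‖ω̄ - ωₙ‖² + (μ/2)‖ωₙ - ω*‖²`.
For the quadratic term, `ḡ - ∇F(ω̄)` is at most `L` times the spread of the `ωₙ` around `ω̄`,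
while `‖∇F(ω̄)‖² ≤ 2L (F(ω̄) - F(ω*))` because `ω*` minimizes the `L`-smooth `F`. The optimality
gap `F(ω̄) - F(ω*)` finally enters with the factor `-2η(1 - 2ηL) ≤ 0` and is dropped.
-/

open Finset
open scoped RealInnerProductSpace

theorem norm_add_sq_le {F : Type*} [NormedAddCommGroup F] [InnerProductSpace ℝ F] (a b : F) :
    ‖a + b‖ ^ 2 ≤ 2 * ‖a‖ ^ 2 + 2 * ‖b‖ ^ 2 := by
  have := parallelogram_law_with_norm ℝ a b
  nlinarith [sq_nonneg ‖a - b‖]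

section Gradient

variable {E : Type*} [NormedAddCommGroup E] [InnerProductSpace ℝ E] [CompleteSpace E]

theorem HasGradientAt.hasDerivAt_comp_lineMap {f : E → ℝ} {G x y : E} {t : ℝ}
    (h : HasGradientAt f G (AffineMap.lineMap x y t)) :
    HasDerivAt (f ∘ AffineMap.lineMap x y) ⟪G, y - x⟫ t := by
  simpa [InnerProductSpace.toDual_apply_apply] using
    h.hasFDerivAt.comp_hasDerivAt t AffineMap.hasDerivAt_lineMap

theorem ConvexOn.add_inner_le_of_hasGradientAt {s : Set E} {f : E → ℝ} {G x y : E}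
    (hf : ConvexOn ℝ s f) (hx : x ∈ s) (hy : y ∈ s) (hG : HasGradientAt f G x) :
    f x + ⟪G, y - x⟫ ≤ f y := by
  have hG₀ : HasGradientAt f G (AffineMap.lineMap x y (0 : ℝ)) := by simpa using hG
  have := (hf.comp_affineMap (AffineMap.lineMap x y)).le_slope_of_hasDerivAt
    (by simpa using hx) (by simpa using hy) one_pos hG₀.hasDerivAt_comp_lineMap
  simp only [slope, sub_zero, inv_one, Function.comp_apply, AffineMap.lineMap_apply_one,
    AffineMap.lineMap_apply_zero, vsub_eq_sub, smul_eq_mul, one_mul] at this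
  linarith

theorem hasGradientAt_norm_sq (x : E) : HasGradientAt (fun z => ‖z‖ ^ 2) ((2 : ℝ) • x) x := by
  have hdual : InnerProductSpace.toDual ℝ E ((2 : ℝ) • x) = 2 • innerSL ℝ x := by
    ext v
    simp
  rw [hasGradientAt_iff_hasFDerivAt, hdual]
  exact (hasStrictFDerivAt_norm_sq x).hasFDerivAt

theorem StrongConvexOn.add_inner_add_le_of_hasGradientAt {s : Set E} {f : E → ℝ} {m : ℝ}
    {G x y : E} (hf : StrongConvexOn s m f) (hx : x ∈ s) (hy : y ∈ s)
    (hG : HasGradientAt f G x) :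
    f x + ⟪G, y - x⟫ + m / 2 * ‖y - x‖ ^ 2 ≤ f y := by
  have hG' : HasGradientAt (fun z => f z - m / 2 * ‖z‖ ^ 2) (G - m • x) x := by
    have hdual : InnerProductSpace.toDual ℝ E (G - m • x) =
        InnerProductSpace.toDual ℝ E G - (m / 2) • InnerProductSpace.toDual ℝ E ((2 : ℝ) • x) := by
      rw [map_sub, map_smul, map_smul, smul_smul]
      norm_num
    rw [hasGradientAt_iff_hasFDerivAt, hdual]
    exact hG.hasFDerivAt.sub ((hasGradientAt_norm_sq x).hasFDerivAt.const_mul (m / 2))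
  have := (strongConvexOn_iff_convex.mp hf).add_inner_le_of_hasGradientAt hx hy hG'
  have hx_inner : ⟪x, y - x⟫ = ⟪y, x⟫ - ‖x‖ ^ 2 := by
    rw [inner_sub_right, real_inner_comm, real_inner_self_eq_norm_sq]
  rw [inner_sub_left, real_inner_smul_left, hx_inner] at this
  rw [norm_sub_sq_real]
  linarith

theorem le_add_inner_add_sq_of_lipschitz_gradient {f : E → ℝ} {g : E → E} {L : ℝ}
    (hf : ∀ z, HasGradientAt f (g z) z) (hg : ∀ z w, ‖g z - g w‖ ≤ L * ‖z - w‖) (x y : E) :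
    f y ≤ f x + ⟪g x, y - x⟫ + L / 2 * ‖y - x‖ ^ 2 := by
  set φ : ℝ → ℝ := fun t =>
    (f ∘ AffineMap.lineMap x y) t - t * ⟪g x, y - x⟫ - L / 2 * ‖y - x‖ ^ 2 * t ^ 2
  have hφ : ∀ t, HasDerivAt φ
      (⟪g (AffineMap.lineMap x y t) - g x, y - x⟫ - L * ‖y - x‖ ^ 2 * t) t := by
    intro t
    refine ((((hf _).hasDerivAt_comp_lineMap).sub
      ((hasDerivAt_id t).mul_const ⟪g x, y - x⟫)).sub
      ((hasDerivAt_pow 2 t).const_mul (L / 2 * ‖y - x‖ ^ 2))).congr_deriv ?_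
    rw [inner_sub_left]
    push_cast
    ring
  have hφ_nonpos : ∀ t ∈ interior (Set.Ici (0 : ℝ)),
      ⟪g (AffineMap.lineMap x y t) - g x, y - x⟫ - L * ‖y - x‖ ^ 2 * t ≤ 0 := by
    intro t ht
    rw [interior_Ici] at ht
    have hdisp : AffineMap.lineMap x y t - x = t • (y - x) := AffineMap.lineMap_vsub_left x y t
    suffices ⟪g (AffineMap.lineMap x y t) - g x, y - x⟫ ≤ L * ‖y - x‖ ^ 2 * t by linarith
    calc ⟪g (AffineMap.lineMap x y t) - g x, y - x⟫
        ≤ ‖g (AffineMap.lineMap x y t) - g x‖ * ‖y - x‖ := real_inner_le_norm _ _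
      _ ≤ L * ‖t • (y - x)‖ * ‖y - x‖ := by
          rw [← hdisp]
          exact mul_le_mul_of_nonneg_right (hg _ _) (norm_nonneg _)
      _ = L * ‖y - x‖ ^ 2 * t := by
          rw [norm_smul, Real.norm_of_nonneg ht.le]
          ring
  have hanti : AntitoneOn φ (Set.Ici 0) :=
    antitoneOn_of_hasDerivWithinAt_nonpos (convex_Ici 0)
      (fun t _ => (hφ t).continuousAt.continuousWithinAt)
      (fun t _ => (hφ t).hasDerivWithinAt) hφ_nonpos
  have := hanti Set.self_mem_Ici (Set.mem_Ici.mpr zero_le_one) zero_le_one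
  simp only [φ, Function.comp_apply, AffineMap.lineMap_apply_one,
    AffineMap.lineMap_apply_zero] at this
  linarith

theorem norm_sq_le_two_mul_sub_of_forall_le {f : E → ℝ} {g : E → E} {L : ℝ} (hL : 0 < L)
    (hf : ∀ z, HasGradientAt f (g z) z) (hg : ∀ z w, ‖g z - g w‖ ≤ L * ‖z - w‖)
    {x₀ : E} (hmin : ∀ y, f x₀ ≤ f y) (x : E) :
    ‖g x‖ ^ 2 ≤ 2 * L * (f x - f x₀) := by
  have hdesc := le_add_inner_add_sq_of_lipschitz_gradient hf hg x (x - L⁻¹ • g x)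
  rw [sub_sub_cancel_left, inner_neg_right, norm_neg, real_inner_smul_right,
    real_inner_self_eq_norm_sq, norm_smul, Real.norm_of_nonneg (inv_nonneg.mpr hL.le)] at hdesc
  have hquad : L / 2 * (L⁻¹ * ‖g x‖) ^ 2 = L⁻¹ * ‖g x‖ ^ 2 / 2 := by
    field_simp
  have hdecrease : L⁻¹ * ‖g x‖ ^ 2 ≤ 2 * (f x - f x₀) := by
    linarith [hmin (x - L⁻¹ • g x)]
  calc ‖g x‖ ^ 2 = L * (L⁻¹ * ‖g x‖ ^ 2) := by field_simp
    _ ≤ L * (2 * (f x - f x₀)) := mul_le_mul_of_nonneg_left hdecrease hL.le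
    _ = 2 * L * (f x - f x₀) := by ring

theorem StrongConvexOn.sub_add_le_inner_gradient {f : E → ℝ} {g : E → E} {L μ : ℝ}
    (hsc : StrongConvexOn Set.univ μ f) (hf : ∀ z, HasGradientAt f (g z) z)
    (hg : ∀ z w, ‖g z - g w‖ ≤ L * ‖z - w‖) (w z x₀ : E) :
    f z - f x₀ - L / 2 * ‖z - w‖ ^ 2 + μ / 2 * ‖w - x₀‖ ^ 2 ≤ ⟪g w, z - x₀⟫ := by
  have hupper := le_add_inner_add_sq_of_lipschitz_gradient hf hg w z
  have hlower := hsc.add_inner_add_le_of_hasGradientAt (Set.mem_univ w) (Set.mem_univ x₀) (hf w)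
  have hsplit : ⟪g w, z - x₀⟫ = ⟪g w, z - w⟫ - ⟪g w, x₀ - w⟫ := by
    rw [← inner_sub_right, sub_sub_sub_cancel_right]
  rw [norm_sub_rev x₀ w] at hlower
  rw [hsplit]
  linarith

variable {ι : Type*} [Fintype ι] {p : ι → ℝ}

theorem norm_sum_smul_le {F : Type*} [NormedAddCommGroup F] [NormedSpace ℝ F]
    (hp : ∀ i, 0 ≤ p i) (v : ι → F) : ‖∑ i, p i • v i‖ ≤ ∑ i, p i * ‖v i‖ :=
  (norm_sum_le _ _).trans_eq <| sum_congr rfl fun i _ => by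
    rw [norm_smul, Real.norm_of_nonneg (hp i)]

theorem norm_sum_smul_sq_le {F : Type*} [NormedAddCommGroup F] [NormedSpace ℝ F]
    (hp : ∀ i, 0 ≤ p i) (hpsum : ∑ i, p i = 1) (v : ι → F) :
    ‖∑ i, p i • v i‖ ^ 2 ≤ ∑ i, p i * ‖v i‖ ^ 2 :=
  (convexOn_univ_norm.pow (fun x _ => norm_nonneg x) 2).map_sum_le (fun i _ => hp i) hpsum
    (fun _ _ => Set.mem_univ _)

theorem hasGradientAt_sum_mul {f : ι → E → ℝ} {G : ι → E} {x : E}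
    (hf : ∀ i, HasGradientAt (f i) (G i) x) :
    HasGradientAt (fun z => ∑ i, p i * f i z) (∑ i, p i • G i) x := by
  rw [hasGradientAt_iff_hasFDerivAt, map_sum]
  simp only [map_smul]
  exact HasFDerivAt.fun_sum fun i _ => (hf i).hasFDerivAt.const_mul (p i)

theorem sum_sub_add_sub_le_inner_sum_smul {f : ι → E → ℝ} {g : ι → E → E}
    {L μ : ℝ} (hp : ∀ i, 0 ≤ p i) (hpsum : ∑ i, p i = 1) (hμ : 0 ≤ μ)
    (hsc : ∀ i, StrongConvexOn Set.univ μ (f i)) (hf : ∀ i z, HasGradientAt (f i) (g i z) z)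
    (hg : ∀ i z w, ‖g i z - g i w‖ ≤ L * ‖z - w‖) (w : ι → E) (z x₀ : E) :
    (∑ i, p i * f i z - ∑ i, p i * f i x₀) + μ / 4 * ‖z - x₀‖ ^ 2
        - (L + μ) / 2 * ∑ i, p i * ‖z - w i‖ ^ 2 ≤ ⟪∑ i, p i • g i (w i), z - x₀⟫ := by
  have hdevice : ∀ i, p i * f i z - p i * f i x₀ + p i * (μ / 4 * ‖z - x₀‖ ^ 2)
      - (L + μ) / 2 * (p i * ‖z - w i‖ ^ 2) ≤ ⟪p i • g i (w i), z - x₀⟫ := by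
    intro i
    -- trades the distance from `w i` to `x₀` for the distance from `z` to `x₀`
    have htri := norm_add_sq_le (z - w i) (w i - x₀)
    rw [sub_add_sub_cancel] at htri
    have hunweighted : f i z - f i x₀ + μ / 4 * ‖z - x₀‖ ^ 2 - (L + μ) / 2 * ‖z - w i‖ ^ 2
        ≤ ⟪g i (w i), z - x₀⟫ := by
      linarith [(hsc i).sub_add_le_inner_gradient (hf i) (hg i) (w i) z x₀,
        mul_le_mul_of_nonneg_left htri hμ]
    rw [real_inner_smul_left]
    linear_combination mul_le_mul_of_nonneg_left hunweighted (hp i)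
  have := sum_le_sum fun i (_ : i ∈ univ) => hdevice i
  simp only [sum_add_distrib, sum_sub_distrib, ← sum_mul, ← mul_sum, hpsum, one_mul] at this
  rwa [sum_inner]

theorem norm_sum_smul_sub_sum_smul_le {F G : Type*} [NormedAddCommGroup F]
    [NormedAddCommGroup G] [NormedSpace ℝ G] {g : ι → F → G} {L : ℝ} (hp : ∀ i, 0 ≤ p i)
    (hpsum : ∑ i, p i = 1) (hg : ∀ i z w, ‖g i z - g i w‖ ≤ L * ‖z - w‖) (z w : F) :
    ‖∑ i, p i • g i z - ∑ i, p i • g i w‖ ≤ L * ‖z - w‖ := by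
  rw [← sum_sub_distrib]
  simp only [← smul_sub]
  calc ‖∑ i, p i • (g i z - g i w)‖ ≤ ∑ i, p i * ‖g i z - g i w‖ := norm_sum_smul_le hp _
    _ ≤ ∑ i, p i * (L * ‖z - w‖) := by gcongr with i; exacts [hp i, hg i z w]
    _ = L * ‖z - w‖ := by rw [← sum_mul, hpsum, one_mul]

theorem norm_sq_sum_smul_gradient_le {f : ι → E → ℝ} {g : ι → E → E} {L : ℝ}
    (hp : ∀ i, 0 ≤ p i) (hpsum : ∑ i, p i = 1) (hL : 0 < L)
    (hf : ∀ i z, HasGradientAt (f i) (g i z) z) (hg : ∀ i z w, ‖g i z - g i w‖ ≤ L * ‖z - w‖)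
    {x₀ : E} (hmin : ∀ y, ∑ i, p i * f i x₀ ≤ ∑ i, p i * f i y) (w : ι → E) (z : E) :
    ‖∑ i, p i • g i (w i)‖ ^ 2 ≤
      2 * L ^ 2 * ∑ i, p i * ‖z - w i‖ ^ 2 + 4 * L * (∑ i, p i * f i z - ∑ i, p i * f i x₀) := by
  have hsplit : ∑ i, p i • g i (w i) = ∑ i, p i • (g i (w i) - g i z) + ∑ i, p i • g i z := by
    simp only [smul_sub, sum_sub_distrib, sub_add_cancel]
  have hdrift : ‖∑ i, p i • (g i (w i) - g i z)‖ ^ 2 ≤ L ^ 2 * ∑ i, p i * ‖z - w i‖ ^ 2 := by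
    refine (norm_sum_smul_sq_le hp hpsum _).trans ?_
    rw [mul_sum]
    refine sum_le_sum fun i _ => ?_
    calc p i * ‖g i (w i) - g i z‖ ^ 2 ≤ p i * (L * ‖z - w i‖) ^ 2 := by
          gcongr
          · exact hp i
          · rw [norm_sub_rev z]; exact hg i (w i) z
      _ = L ^ 2 * (p i * ‖z - w i‖ ^ 2) := by ring
  have hgap := norm_sq_le_two_mul_sub_of_forall_le hL
    (fun x => hasGradientAt_sum_mul (p := p) fun i => hf i x)
    (norm_sum_smul_sub_sum_smul_le hp hpsum hg) hmin z
  rw [hsplit]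
  linarith [norm_add_sq_le (∑ i, p i • (g i (w i) - g i z)) (∑ i, p i • g i z)]

end Gradient

theorem one_step_contraction_full_batch_general
    {M : ℕ} {N : ℕ}
    (L μ : ℝ) (hμ : 0 < μ)
    (F : Fin N → EuclideanSpace ℝ (Fin M) → ℝ)
    (g : Fin N → EuclideanSpace ℝ (Fin M) → EuclideanSpace ℝ (Fin M))
    (hgrad : ∀ n x, HasGradientAt (F n) (g n x) x)
    (hlip : ∀ n x y, ‖g n x - g n y‖ ≤ L * ‖x - y‖)
    (hsc : ∀ n, ConvexOn ℝ Set.univ (fun x => F n x - μ / 2 * ‖x‖ ^ 2))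
    (p : Fin N → ℝ) (hp : ∀ n, 0 ≤ p n) (hpsum : ∑ n, p n = 1)
    (ωstar : EuclideanSpace ℝ (Fin M))
    (hmin : ∀ x, ∑ n, p n * F n ωstar ≤ ∑ n, p n * F n x)
    (ω : Fin N → EuclideanSpace ℝ (Fin M))
    (ωbar : EuclideanSpace ℝ (Fin M)) (hωbar : ωbar = ∑ n, p n • ω n)
    (η : ℝ) (hη0 : 0 < η) (hη : η < 1 / (2 * L)) :
    ‖(∑ n, p n • (ω n - η • g n (ω n))) - ωstar‖ ^ 2 ≤
      (1 - μ * η / 2) * ‖ωbar - ωstar‖ ^ 2 +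
        (2 * η ^ 2 * L ^ 2 + (L + μ) * η) * ∑ n, p n * ‖ωbar - ω n‖ ^ 2 := by
  have hL : 0 < L := by
    by_contra! hL
    linarith [one_div_nonpos.mpr (by linarith : 2 * L ≤ 0)]
  have hηL : 2 * η * L < 1 := by
    have := (lt_div_iff₀ (by positivity : (0 : ℝ) < 2 * L)).mp hη
    linarith
  have hstep : (∑ n, p n • (ω n - η • g n (ω n))) - ωstar =
      (ωbar - ωstar) - η • ∑ n, p n • g n (ω n) := by
    simp only [smul_sub, smul_comm (p _) η, sum_sub_distrib, ← smul_sum, hωbar]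
    abel
  have hinner := sum_sub_add_sub_le_inner_sum_smul hp hpsum hμ.le
    (fun n => strongConvexOn_iff_convex.mpr (hsc n)) hgrad hlip ω ωbar ωstar
  have hgrad_sq := norm_sq_sum_smul_gradient_le hp hpsum hL hgrad hlip hmin ω ωbar
  have hgap : 0 ≤ ∑ n, p n * F n ωbar - ∑ n, p n * F n ωstar := sub_nonneg.mpr (hmin ωbar)
  rw [hstep, norm_sub_sq_real, real_inner_smul_right, norm_smul, Real.norm_of_nonneg hη0.le,
    mul_pow, real_inner_comm]
  linarith [mul_le_mul_of_nonneg_left hinner (by positivity : 0 ≤ 2 * η),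
    mul_le_mul_of_nonneg_left hgrad_sq (sq_nonneg η),
    mul_nonneg (mul_nonneg hη0.le hgap) (by linarith : 0 ≤ 1 - 2 * η * L)]

/-- The deterministic one-step contraction (eq. 'delta rec' in Appendix H):
with `L`-smooth, `μ`-strongly convex local losses, weights `p_n` summing to `1`,
global minimizer `ω*` of `F = Σ_n p_n F_n`, and step size `0 < η < 1/(2L)`,
one full-batch gradient step at each device yields
`‖Σ_n p_n (ω_n − η ∇F_n(ω_n)) − ω*‖² ≤ (1 − μη/2)‖ω̄ − ω*‖²
  + (2η²L² + (L+μ)η) Σ_n p_n ‖ω̄ − ω_n‖²`. -/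
theorem one_step_contraction_full_batch
    {M : ℕ} (hM : 1 ≤ M) {N : ℕ}
    (L μ : ℝ) (hμ : 0 < μ) (hμL : μ ≤ L)
    (F : Fin N → EuclideanSpace ℝ (Fin M) → ℝ)
    (g : Fin N → EuclideanSpace ℝ (Fin M) → EuclideanSpace ℝ (Fin M))
    (hgrad : ∀ n x, HasGradientAt (F n) (g n x) x)
    (hlip : ∀ n x y, ‖g n x - g n y‖ ≤ L * ‖x - y‖)
    (hsc : ∀ n, ConvexOn ℝ Set.univ (fun x => F n x - μ / 2 * ‖x‖ ^ 2))
    (p : Fin N → ℝ) (hp : ∀ n, 0 ≤ p n) (hpsum : ∑ n, p n = 1)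
    (ωstar : EuclideanSpace ℝ (Fin M))
    (hmin : ∀ x, ∑ n, p n * F n ωstar ≤ ∑ n, p n * F n x)
    (ω : Fin N → EuclideanSpace ℝ (Fin M))
    (ωbar : EuclideanSpace ℝ (Fin M)) (hωbar : ωbar = ∑ n, p n • ω n)
    (η : ℝ) (hη0 : 0 < η) (hη : η < 1 / (2 * L)) :
    ‖(∑ n, p n • (ω n - η • g n (ω n))) - ωstar‖ ^ 2 ≤
      (1 - μ * η / 2) * ‖ωbar - ωstar‖ ^ 2 +
        (2 * η ^ 2 * L ^ 2 + (L + μ) * η) * ∑ n, p n * ‖ωbar - ω n‖ ^ 2 :=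
  one_step_contraction_full_batch_general L μ hμ F g hgrad hlip hsc p hp hpsum ωstar hmin ω ωbar
    hωbar η hη0 hη
end

section
/- Let E be a real inner product space, η > 0, G ≥ 0, and let p_1, …, p_N ≥ 0 with Σ_n p_n = 1. Let ω_{n,0} ∈ E be given, and for i ≥ 1 define ω_{n,i} = ω_{n,i−1} − η g_{n,i−1}, where the update vectors satisfy ‖g_{n,i}‖ ≤ G for all n and i. Set ω̄_i = Σ_{n=1}^N p_n ω_{n,i}. Then for every i ≥ 0, Σ_{n=1}^N p_n ‖ω̄_i − ω_{n,i}‖² ≤ (1+η)^i · Σ_{n=1}^N p_n ‖ω̄_0 − ω_{n,0}‖² + ((1+η)^{i+1} − (1+η)) · G². -/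
open Finset

/-!
Replacing the current average `ω̄ᵢ` by the stale one `ω̄ᵢ₋₁` can only increase the weighted
drift, since the weighted mean minimises the weighted sum of squared distances. Against the fixed
centre `ω̄ᵢ₋₁` each local model moves by `η gᵢ₋₁`, and Young's inequality
`‖a + b‖² ≤ (1 + η)‖a‖² + (1 + 1/η)‖b‖²` turns this into the recursion
`Dᵢ ≤ (1 + η) Dᵢ₋₁ + η (1 + η) G²`, whose solution is the stated bound.
-/

theorem norm_add_sq_le_one_add_mul {E : Type*} [SeminormedAddGroup E] {η : ℝ} (hη : 0 < η)
    (a b : E) : ‖a + b‖ ^ 2 ≤ (1 + η) * ‖a‖ ^ 2 + (1 + η⁻¹) * ‖b‖ ^ 2 := by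
  calc ‖a + b‖ ^ 2 ≤ (‖a‖ + ‖b‖) ^ 2 := by gcongr; exact norm_add_le a b
    _ = ‖a‖ ^ 2 + 2 * ‖a‖ * ‖b‖ + ‖b‖ ^ 2 := by ring
    _ ≤ ‖a‖ ^ 2 + (η * ‖a‖ ^ 2 + η⁻¹ * ‖b‖ ^ 2) + ‖b‖ ^ 2 := by
      gcongr; exact two_mul_le_add_mul_sq hη
    _ = (1 + η) * ‖a‖ ^ 2 + (1 + η⁻¹) * ‖b‖ ^ 2 := by ring

theorem norm_add_smul_sq_le {E : Type*} [SeminormedAddCommGroup E] [NormedSpace ℝ E]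
    {η G : ℝ} (hη : 0 < η) (a : E) {v : E} (hv : ‖v‖ ≤ G) :
    ‖a + η • v‖ ^ 2 ≤ (1 + η) * ‖a‖ ^ 2 + η * (1 + η) * G ^ 2 := by
  calc ‖a + η • v‖ ^ 2 ≤ (1 + η) * ‖a‖ ^ 2 + (1 + η⁻¹) * (η * ‖v‖) ^ 2 := by
        simpa only [norm_smul, Real.norm_of_nonneg hη.le] using
          norm_add_sq_le_one_add_mul hη a (η • v)
    _ ≤ (1 + η) * ‖a‖ ^ 2 + (1 + η⁻¹) * (η * G) ^ 2 := by gcongr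
    _ = (1 + η) * ‖a‖ ^ 2 + η * (1 + η) * G ^ 2 := by field_simp; ring

theorem le_pow_mul_add_of_le_mul_add {a : ℕ → ℝ} {r c : ℝ} (hr : 0 ≤ r)
    (ha : ∀ i, a (i + 1) ≤ r * a i + (r - 1) * c) (i : ℕ) :
    a i ≤ r ^ i * a 0 + (r ^ i - 1) * c := by
  induction i with
  | zero => simp
  | succ i ih =>
    calc a (i + 1) ≤ r * a i + (r - 1) * c := ha i
      _ ≤ r * (r ^ i * a 0 + (r ^ i - 1) * c) + (r - 1) * c := by gcongr
      _ = r ^ (i + 1) * a 0 + (r ^ (i + 1) - 1) * c := by ring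

section WeightedMean

variable {ι E : Type*} [Fintype ι] [NormedAddCommGroup E] [InnerProductSpace ℝ E]
  {p : ι → ℝ}

theorem sum_smul_weightedMean_sub (hp : ∑ n, p n = 1) (x : ι → E) :
    ∑ n, p n • ((∑ m, p m • x m) - x n) = 0 := by
  simp [smul_sub, sum_sub_distrib, ← sum_smul, hp]

theorem sum_mul_norm_sub_sq_eq (hp : ∑ n, p n = 1) (x : ι → E) (c : E) :
    ∑ n, p n * ‖c - x n‖ ^ 2 =
      ‖c - ∑ m, p m • x m‖ ^ 2 + ∑ n, p n * ‖(∑ m, p m • x m) - x n‖ ^ 2 := by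
  set μ := ∑ m, p m • x m
  have hcross : ∑ n, p n * inner ℝ (c - μ) (μ - x n) = 0 := by
    simp_rw [← real_inner_smul_right, ← inner_sum, μ, sum_smul_weightedMean_sub hp,
      inner_zero_right]
  calc ∑ n, p n * ‖c - x n‖ ^ 2
      = ∑ n, p n * (‖c - μ‖ ^ 2 + 2 * inner ℝ (c - μ) (μ - x n) + ‖μ - x n‖ ^ 2) := by
        simp_rw [← norm_add_sq_real, sub_add_sub_cancel]
    _ = (∑ n, p n) * ‖c - μ‖ ^ 2 + 2 * ∑ n, p n * inner ℝ (c - μ) (μ - x n)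
          + ∑ n, p n * ‖μ - x n‖ ^ 2 := by
        simp only [mul_add, sum_add_distrib, sum_mul, mul_sum]
        congr 2
        exact sum_congr rfl fun n _ => by ring
    _ = ‖c - μ‖ ^ 2 + ∑ n, p n * ‖μ - x n‖ ^ 2 := by rw [hp, hcross]; ring

theorem sum_mul_norm_weightedMean_sub_sq_le (hp : ∑ n, p n = 1) (x : ι → E) (c : E) :
    ∑ n, p n * ‖(∑ m, p m • x m) - x n‖ ^ 2 ≤ ∑ n, p n * ‖c - x n‖ ^ 2 := by
  rw [sum_mul_norm_sub_sq_eq hp x c]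
  exact le_add_of_nonneg_left (sq_nonneg _)

theorem sum_mul_norm_weightedMean_sub_sq_le_of_step {η G : ℝ} (hη : 0 < η)
    (hp₀ : ∀ n, 0 ≤ p n) (hp : ∑ n, p n = 1) {x y v : ι → E} (hv : ∀ n, ‖v n‖ ≤ G)
    (hy : ∀ n, y n = x n - η • v n) :
    ∑ n, p n * ‖(∑ m, p m • y m) - y n‖ ^ 2 ≤
      (1 + η) * ∑ n, p n * ‖(∑ m, p m • x m) - x n‖ ^ 2 + η * (1 + η) * G ^ 2 := by
  set μ := ∑ m, p m • x m
  calc ∑ n, p n * ‖(∑ m, p m • y m) - y n‖ ^ 2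
      ≤ ∑ n, p n * ‖μ - y n‖ ^ 2 := sum_mul_norm_weightedMean_sub_sq_le hp y μ
    _ ≤ ∑ n, p n * ((1 + η) * ‖μ - x n‖ ^ 2 + η * (1 + η) * G ^ 2) := by
        gcongr with n
        · exact hp₀ n
        · rw [hy, sub_sub_eq_add_sub, add_sub_right_comm]
          exact norm_add_smul_sq_le hη _ (hv n)
    _ = (1 + η) * ∑ n, p n * ‖μ - x n‖ ^ 2 + η * (1 + η) * G ^ 2 := by
        simp only [mul_add, sum_add_distrib, ← sum_mul, hp, mul_sum]
        congr 1
        · exact sum_congr rfl fun n _ => by ring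
        · ring

end WeightedMean

theorem local_drift_bound_general
    {E : Type*} [NormedAddCommGroup E] [InnerProductSpace ℝ E]
    {N : ℕ} (η G : ℝ) (hη : 0 < η)
    (p : Fin N → ℝ) (hp : ∀ n, 0 ≤ p n) (hpsum : ∑ n, p n = 1)
    (ω : ℕ → Fin N → E) (g : ℕ → Fin N → E)
    (hgbound : ∀ i n, ‖g i n‖ ≤ G)
    (hrec : ∀ i n, ω (i + 1) n = ω i n - η • g i n) :
    ∀ i : ℕ,
      ∑ n, p n * ‖(∑ m, p m • ω i m) - ω i n‖ ^ 2 ≤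
        (1 + η) ^ i * ∑ n, p n * ‖(∑ m, p m • ω 0 m) - ω 0 n‖ ^ 2 +
          ((1 + η) ^ (i + 1) - (1 + η)) * G ^ 2 := by
  intro i
  have hstep (j : ℕ) := sum_mul_norm_weightedMean_sub_sq_le_of_step hη hp hpsum
    (hgbound j) (hrec j)
  have hsolve := le_pow_mul_add_of_le_mul_add
    (a := fun j => ∑ n, p n * ‖(∑ m, p m • ω j m) - ω j n‖ ^ 2) (r := 1 + η)
    (c := (1 + η) * G ^ 2) (by positivity) (fun j => (hstep j).trans_eq (by ring)) i
  exact hsolve.trans_eq (by ring)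

/-- The deterministic core of Lemma 6 (Appendix G): under bounded update vectors
`‖g_{n,i}‖ ≤ G` and updates `ω_{n,i} = ω_{n,i−1} − η g_{n,i−1}`, the weighted drift
from the virtual average satisfies, for every `i ≥ 0`,
`Σ_n p_n ‖ω̄_i − ω_{n,i}‖² ≤ (1+η)^i Σ_n p_n ‖ω̄_0 − ω_{n,0}‖²
  + ((1+η)^{i+1} − (1+η)) G²`. -/
theorem local_drift_bound
    {E : Type*} [NormedAddCommGroup E] [InnerProductSpace ℝ E]
    {N : ℕ} (η G : ℝ) (hη : 0 < η) (hG : 0 ≤ G)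
    (p : Fin N → ℝ) (hp : ∀ n, 0 ≤ p n) (hpsum : ∑ n, p n = 1)
    (ω : ℕ → Fin N → E) (g : ℕ → Fin N → E)
    (hgbound : ∀ i n, ‖g i n‖ ≤ G)
    (hrec : ∀ i n, ω (i + 1) n = ω i n - η • g i n) :
    ∀ i : ℕ,
      ∑ n, p n * ‖(∑ m, p m • ω i m) - ω i n‖ ^ 2 ≤
        (1 + η) ^ i * ∑ n, p n * ‖(∑ m, p m • ω 0 m) - ω 0 n‖ ^ 2 +
          ((1 + η) ^ (i + 1) - (1 + η)) * G ^ 2 :=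
  local_drift_bound_general η G hη p hp hpsum ω g hgbound hrec
end
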